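/- (Smoothness of the gradient field) For an n-agent tabular discounted MDP with rewards r_i(s,a) ∈ [0,1] and direct distributed parameterization, the map g(θ) = (∇_{θ_1} J_1(θ), …, ∇_{θ_n} J_n(θ)) satisfies ‖g(θ') − g(θ)‖ ≤ (2/(1−γ)³)(∑_{i=1}^n |A_i|) ‖θ' − θ‖ for all feasible θ, θ'. -/

import Mathlib

open Finset

namespace MAMDP

variable {n : ℕ} {S : Type} [Fintype S] [DecidableEq S]
  {A : Fin n → Type} [∀ i, Fintype (A i)] [∀ i, DecidableEq (A i)]

/-- Joint product policy probability. -/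
def jointPi (θ : ∀ i, S → A i → ℝ) (s : S) (a : ∀ i, A i) : ℝ :=
  ∏ i, θ i s (a i)

/-- One-step evolution of a state distribution under the joint policy. -/
def stepDist (P : S → (∀ i, A i) → S → ℝ) (θ : ∀ i, S → A i → ℝ) (μ : S → ℝ) : S → ℝ :=
  fun s' => ∑ s, ∑ a, μ s * jointPi θ s a * P s a s'

/-- State distribution after `t` steps, starting from `μ`. -/
def visit (P : S → (∀ i, A i) → S → ℝ) (θ : ∀ i, S → A i → ℝ) (t : ℕ) (μ : S → ℝ) : S → ℝ :=
  (stepDist P θ)^[t] μ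

/-- Point mass at `s0`. -/
def deltaDist (s0 : S) : S → ℝ := fun s => if s = s0 then 1 else 0

/-- Discounted state visitation distribution `d_θ` for initial distribution `ρ`. -/
noncomputable def dvisit (P : S → (∀ i, A i) → S → ℝ) (θ : ∀ i, S → A i → ℝ) (γ : ℝ)
    (ρ : S → ℝ) (s : S) : ℝ :=
  (1 - γ) * ∑' t : ℕ, γ ^ t * visit P θ t ρ s

/-- Expected one-step reward at state `s` under the joint policy. -/
def expRew (rw : S → (∀ i, A i) → ℝ) (θ : ∀ i, S → A i → ℝ) (s : S) : ℝ :=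
  ∑ a, jointPi θ s a * rw s a

/-- Value function: expected discounted sum of rewards starting from state `s`. -/
noncomputable def Vval (P : S → (∀ i, A i) → S → ℝ) (θ : ∀ i, S → A i → ℝ) (γ : ℝ)
    (rw : S → (∀ i, A i) → ℝ) (s : S) : ℝ :=
  ∑' t : ℕ, γ ^ t * ∑ s', visit P θ t (deltaDist s) s' * expRew rw θ s'

/-- Q-function. -/
noncomputable def Qval (P : S → (∀ i, A i) → S → ℝ) (θ : ∀ i, S → A i → ℝ) (γ : ℝ)
    (rw : S → (∀ i, A i) → ℝ) (s : S) (a : ∀ i, A i) : ℝ :=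
  rw s a + γ * ∑ s', P s a s' * Vval P θ γ rw s'

/-- Total discounted reward `J` under initial distribution `ρ`. -/
noncomputable def Jval (P : S → (∀ i, A i) → S → ℝ) (θ : ∀ i, S → A i → ℝ) (γ : ℝ)
    (rw : S → (∀ i, A i) → ℝ) (ρ : S → ℝ) : ℝ :=
  ∑ s, ρ s * Vval P θ γ rw s

/-- Averaged Q-function of agent `i`: average of `Q(s, a)` with `a i = ai` fixed,
weighted by the other agents' policies. -/
noncomputable def Qbar (P : S → (∀ i, A i) → S → ℝ) (θ : ∀ i, S → A i → ℝ) (γ : ℝ)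
    (rw : S → (∀ i, A i) → ℝ) (i : Fin n) (s : S) (ai : A i) : ℝ :=
  ∑ a : ∀ j, A j, if a i = ai then
    (∏ j ∈ Finset.univ.erase i, θ j s (a j)) * Qval P θ γ rw s a else 0

/-- Averaged advantage function of agent `i`. -/
noncomputable def Abar (P : S → (∀ i, A i) → S → ℝ) (θ : ∀ i, S → A i → ℝ) (γ : ℝ)
    (rw : S → (∀ i, A i) → ℝ) (i : Fin n) (s : S) (ai : A i) : ℝ :=
  Qbar P θ γ rw i s ai - Vval P θ γ rw s

/-- Entries of the policy gradient `∇_{θ_i} J_i(θ)`: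
`(1/(1-γ)) d_θ(s) Q̄_i^θ(s, a_i)`. -/
noncomputable def gradJ (P : S → (∀ i, A i) → S → ℝ) (θ : ∀ i, S → A i → ℝ) (γ : ℝ)
    (rw : S → (∀ i, A i) → ℝ) (ρ : S → ℝ) (i : Fin n) (s : S) (ai : A i) : ℝ :=
  (1 / (1 - γ)) * dvisit P θ γ ρ s * Qbar P θ γ rw i s ai

/-- Feasibility of agent `i`'s parameters: a point of `Δ(A_i)^{|S|}`. -/
def feasibleAgent (i : Fin n) (θi : S → A i → ℝ) : Prop :=
  ∀ s, (∀ a, 0 ≤ θi s a) ∧ ∑ a, θi s a = 1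

/-- Feasibility of a joint parameter `θ ∈ X = ∏_i Δ(A_i)^{|S|}`. -/
def feasible (θ : ∀ i, S → A i → ℝ) : Prop := ∀ i, feasibleAgent i (θ i)

/-- `P` is a transition kernel. -/
def stochMat (P : S → (∀ i, A i) → S → ℝ) : Prop :=
  ∀ s a, (∀ s', 0 ≤ P s a s') ∧ ∑ s', P s a s' = 1

/-- `ρ` is a probability distribution on states. -/
def initDist (ρ : S → ℝ) : Prop := (∀ s, 0 ≤ ρ s) ∧ ∑ s, ρ s = 1

/-- Nash equilibrium. -/
def isNE (P : S → (∀ i, A i) → S → ℝ) (γ : ℝ) (r : Fin n → S → (∀ i, A i) → ℝ)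
    (ρ : S → ℝ) (θ : ∀ i, S → A i → ℝ) : Prop :=
  feasible θ ∧ ∀ (i : Fin n) (θi' : S → A i → ℝ), feasibleAgent i θi' →
    Jval P (Function.update θ i θi') γ (r i) ρ ≤ Jval P θ γ (r i) ρ

/-- Strict Nash equilibrium. -/
def strictNE (P : S → (∀ i, A i) → S → ℝ) (γ : ℝ) (r : Fin n → S → (∀ i, A i) → ℝ)
    (ρ : S → ℝ) (θ : ∀ i, S → A i → ℝ) : Prop :=
  feasible θ ∧ ∀ (i : Fin n) (θi' : S → A i → ℝ), feasibleAgent i θi' → θi' ≠ θ i →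
    Jval P (Function.update θ i θi') γ (r i) ρ < Jval P θ γ (r i) ρ

/-- Markov potential game with potential `φ`. -/
def isPotential (P : S → (∀ i, A i) → S → ℝ) (γ : ℝ) (r : Fin n → S → (∀ i, A i) → ℝ)
    (φ : S → (∀ i, A i) → ℝ) : Prop :=
  ∀ (θ : ∀ i, S → A i → ℝ), feasible θ → ∀ (i : Fin n) (θi' : S → A i → ℝ),
    feasibleAgent i θi' → ∀ s,
    Vval P (Function.update θ i θi') γ (r i) s - Vval P θ γ (r i) s
      = Vval P (Function.update θ i θi') γ φ s - Vval P θ γ φ s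

/-- Squared Euclidean distance between two joint parameters. -/
def polNormSq (x y : ∀ i, S → A i → ℝ) : ℝ :=
  ∑ i, ∑ s, ∑ a, (x i s a - y i s a) ^ 2

/-- The deterministic (pure) joint policy picking `astar i s`. -/
def purePol (astar : ∀ i : Fin n, S → A i) : ∀ i, S → A i → ℝ :=
  fun i s a => if a = astar i s then 1 else 0

end MAMDP

open MAMDP

/-!
Let `D` bound, at every state `s`, the total ℓ¹ distance `∑ⱼ ‖θ'ⱼ(s) − θⱼ(s)‖₁` of the agents'
policies. Swapping one factor at a time shows that the product policies are `D`-close in ℓ¹, so one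
step of the state chain moves a distribution by at most `D`, `t` steps by `t D`, and the discounted
visitation distribution by `γ D / (1 − γ)`. Since `V(s) = (1 − γ)⁻¹ ⟨d_{δ_s}, r_θ⟩`, this gives
`|V' − V| ≤ D / (1 − γ)²`, and the same bound for `Q̄ᵢ(s, aᵢ)`, the average of `Q(s, ·)` under the
joint policy in which agent `i` plays `aᵢ`. Each slice `s ↦ ∇_{θᵢ(s, aᵢ)} Jᵢ` therefore moves by at
most `(1 + γ) D / (1 − γ)³` in ℓ¹, hence in ℓ². By Cauchy–Schwarz `D = √(∑ᵢ |Aᵢ|) ‖θ' − θ‖` is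
admissible, and summing over the `∑ᵢ |Aᵢ|` slices gives the claim.
-/

open Finset

theorem prod_apply_update {ι M : Type*} [Fintype ι] [DecidableEq ι] [CommMonoid M]
    {β : ι → Type*} (G : ∀ i, β i → M) (K : ∀ i, β i) (j : ι) (u : β j) :
    ∏ i, G i (Function.update K j u i) = G j u * ∏ i ∈ univ.erase j, G i (K i) := by
  simp only [Function.apply_update G K j u]
  rw [prod_update_of_mem (mem_univ j), sdiff_singleton_eq_erase]

theorem summable_pow_mul_of_abs_le {γ B : ℝ} (hγ0 : 0 ≤ γ) (hγ1 : γ < 1) {x : ℕ → ℝ}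
    (hx : ∀ t, |x t| ≤ B) : Summable fun t => γ ^ t * x t :=
  .of_norm_bounded ((summable_geometric_of_lt_one hγ0 hγ1).mul_right B) fun t => by
    rw [Real.norm_eq_abs, abs_mul, abs_pow, abs_of_nonneg hγ0]
    exact mul_le_mul_of_nonneg_left (hx t) (by positivity)

theorem sum_sum_abs_le_sqrt_mul_sqrt {ι : Type*} [Fintype ι] {κ : ι → Type*}
    [∀ i, Fintype (κ i)] (y : ∀ i, κ i → ℝ) :
    ∑ i, ∑ x, |y i x| ≤ √(∑ i, (Fintype.card (κ i) : ℝ)) * √(∑ i, ∑ x, y i x ^ 2) := by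
  have h := sum_mul_sq_le_sq_mul_sq (univ : Finset (Σ i, κ i)) (fun _ => 1) fun p => |y p.1 p.2|
  simp only [Fintype.sum_sigma, one_pow, one_mul, sq_abs, sum_const, card_univ,
    Fintype.card_sigma, nsmul_eq_mul, mul_one, Nat.cast_sum] at h
  rw [← Real.sqrt_mul (sum_nonneg fun i _ => Nat.cast_nonneg _)]
  exact (le_abs_self _).trans (Real.abs_le_sqrt h)

theorem sum_sq_le_sq_of_sum_abs_le {α : Type*} [Fintype α] {x : α → ℝ} {c : ℝ}
    (h : ∑ a, |x a| ≤ c) : ∑ a, x a ^ 2 ≤ c ^ 2 := by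
  simp only [← sq_abs (x _)]
  exact (sum_sq_le_sq_sum_of_nonneg fun _ _ => abs_nonneg _).trans <|
    pow_le_pow_left₀ (sum_nonneg fun _ _ => abs_nonneg _) h 2

namespace MAMDP

section ProbabilityVectors

variable {α : Type} [Fintype α] {μ μ' f f' : α → ℝ} {B C : ℝ}

theorem initDist.le_one (hμ : initDist μ) (x : α) : μ x ≤ 1 :=
  hμ.2 ▸ single_le_sum (fun y _ => hμ.1 y) (mem_univ x)

theorem initDist_deltaDist [DecidableEq α] (x₀ : α) : initDist (deltaDist x₀) :=
  ⟨fun x => by unfold deltaDist; split_ifs <;> norm_num, by simp [deltaDist]⟩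

theorem initDist.abs_sum_mul_le (hμ : initDist μ) (hf : ∀ x, |f x| ≤ B) :
    |∑ x, μ x * f x| ≤ B := by
  calc |∑ x, μ x * f x| ≤ ∑ x, μ x * B := (abs_sum_le_sum_abs _ _).trans <|
        sum_le_sum fun x _ => by
          rw [abs_mul, abs_of_nonneg (hμ.1 x)]
          exact mul_le_mul_of_nonneg_left (hf x) (hμ.1 x)
    _ = B := by rw [← sum_mul, hμ.2, one_mul]

theorem sum_abs_mul_sub_mul_le (hμ : initDist μ) (hf' : ∀ x, |f' x| ≤ B)
    (hf : ∀ x, |f' x - f x| ≤ C) :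
    ∑ x, |μ' x * f' x - μ x * f x| ≤ (∑ x, |μ' x - μ x|) * B + C := by
  calc ∑ x, |μ' x * f' x - μ x * f x| ≤ ∑ x, (|μ' x - μ x| * B + μ x * C) :=
        sum_le_sum fun x _ => by
          rw [show μ' x * f' x - μ x * f x = (μ' x - μ x) * f' x + μ x * (f' x - f x) by ring]
          refine (abs_add_le _ _).trans (add_le_add ?_ ?_)
          · rw [abs_mul]; exact mul_le_mul_of_nonneg_left (hf' x) (abs_nonneg _)
          · rw [abs_mul, abs_of_nonneg (hμ.1 x)]; exact mul_le_mul_of_nonneg_left (hf x) (hμ.1 x)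
    _ = (∑ x, |μ' x - μ x|) * B + C := by
      rw [sum_add_distrib, ← sum_mul, ← sum_mul, hμ.2, one_mul]

theorem abs_sum_mul_sub_sum_mul_le (hμ : initDist μ) (hf' : ∀ x, |f' x| ≤ B)
    (hf : ∀ x, |f' x - f x| ≤ C) :
    |∑ x, μ' x * f' x - ∑ x, μ x * f x| ≤ (∑ x, |μ' x - μ x|) * B + C := by
  rw [← sum_sub_distrib]
  exact (abs_sum_le_sum_abs _ _).trans (sum_abs_mul_sub_mul_le hμ hf' hf)

end ProbabilityVectors

section ProductDistributions

variable {ι : Type} [Fintype ι] [DecidableEq ι] {κ : ι → Type} [∀ i, Fintype (κ i)]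

theorem sum_abs_prod_update_sub_prod_update (K : ∀ i, κ i → ℝ) (j : ι)
    (hK : ∀ i ≠ j, initDist (K i)) (u v : κ j → ℝ) :
    ∑ a : ∀ i, κ i, |∏ i, Function.update K j u i (a i) - ∏ i, Function.update K j v i (a i)|
      = ∑ x, |u x - v x| := by
  have hpt (a : ∀ i, κ i) :
      |∏ i, Function.update K j u i (a i) - ∏ i, Function.update K j v i (a i)|
        = ∏ i, Function.update K j (fun x => |u x - v x|) i (a i) := by
    simp only [prod_apply_update (fun i (k : κ i → ℝ) => k (a i))]
    rw [← sub_mul, abs_mul,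
      abs_of_nonneg (prod_nonneg fun i hi => (hK i (ne_of_mem_erase hi)).1 _)]
  simp only [hpt, ← Fintype.prod_sum, prod_apply_update (fun i (k : κ i → ℝ) => ∑ x, k x)]
  rw [prod_eq_one fun i hi => (hK i (ne_of_mem_erase hi)).2, mul_one]

theorem sum_abs_prod_sub_prod_le {f g : ∀ i, κ i → ℝ} (hf : ∀ i, initDist (f i))
    (hg : ∀ i, initDist (g i)) :
    ∑ a : ∀ i, κ i, |∏ i, f i (a i) - ∏ i, g i (a i)| ≤ ∑ i, ∑ x, |f i x - g i x| := by
  let H (t : Finset ι) : ∀ i, κ i → ℝ := fun i => if i ∈ t then f i else g i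
  suffices ∀ t, ∑ a : ∀ i, κ i, |∏ i, H t i (a i) - ∏ i, g i (a i)|
      ≤ ∑ i ∈ t, ∑ x, |f i x - g i x| by simpa [H] using this univ
  intro t
  induction t using Finset.induction_on with
  | empty => simp [H]
  | insert j t hj ih =>
    have hH (i : ι) : initDist (H t i) := by by_cases hi : i ∈ t <;> simp [H, hi, hf i, hg i]
    have hins : H (insert j t) = Function.update (H t) j (f j) := by
      funext i
      rcases eq_or_ne i j with rfl | hij
      · simp [H]
      · simp [H, hij]
    have hself : Function.update (H t) j (g j) = H t := by
      rw [show g j = H t j by simp [H, hj], Function.update_eq_self]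
    have hstep := sum_abs_prod_update_sub_prod_update (H t) j (fun i _ => hH i) (f j) (g j)
    rw [← hins, hself] at hstep
    calc ∑ a : ∀ i, κ i, |∏ i, H (insert j t) i (a i) - ∏ i, g i (a i)|
        ≤ ∑ a : ∀ i, κ i, (|∏ i, H (insert j t) i (a i) - ∏ i, H t i (a i)|
            + |∏ i, H t i (a i) - ∏ i, g i (a i)|) :=
          sum_le_sum fun a _ => abs_sub_le _ _ _
      _ ≤ ∑ x, |f j x - g j x| + ∑ i ∈ t, ∑ x, |f i x - g i x| := by
          rw [sum_add_distrib, hstep]; gcongr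
      _ = ∑ i ∈ insert j t, ∑ x, |f i x - g i x| := by rw [sum_insert hj]

end ProductDistributions

section JointPolicy

variable {n : ℕ} {S : Type} {A : Fin n → Type} [∀ i, Fintype (A i)]
  {θ θ' : ∀ i, S → A i → ℝ}

theorem feasible.initDist_jointPi (hθ : feasible θ) (s : S) : initDist (jointPi θ s) :=
  ⟨fun a => prod_nonneg fun i _ => (hθ i s).1 (a i), by
    simp only [jointPi, ← Fintype.prod_sum]; exact prod_eq_one fun i _ => (hθ i s).2⟩

theorem sum_abs_jointPi_sub_le (hθ : feasible θ) (hθ' : feasible θ') (s : S) :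
    ∑ a, |jointPi θ' s a - jointPi θ s a| ≤ ∑ j, ∑ x, |θ' j s x - θ j s x| :=
  sum_abs_prod_sub_prod_le (fun i => hθ' i s) (fun i => hθ i s)

theorem feasible.update (hθ : feasible θ) {i : Fin n} {φ : S → A i → ℝ}
    (hφ : feasibleAgent i φ) : feasible (Function.update θ i φ) :=
  (Function.forall_update_iff θ (p := fun j ψ => feasibleAgent j ψ)).2 ⟨hφ, fun j _ => hθ j⟩

theorem sum_sum_abs_update_sub_le (i : Fin n) (φ : S → A i → ℝ) (s : S) :
    ∑ j, ∑ x, |Function.update θ' i φ j s x - Function.update θ i φ j s x|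
      ≤ ∑ j, ∑ x, |θ' j s x - θ j s x| := by
  refine sum_le_sum fun j _ => ?_
  rcases eq_or_ne j i with rfl | hji
  · simpa using sum_nonneg fun x _ => abs_nonneg _
  · simp [Function.update_of_ne hji]

variable {R : S → (∀ i, A i) → ℝ} {D : ℝ}

theorem abs_expRew_le (hθ : feasible θ) (hR : ∀ s a, |R s a| ≤ 1) (s : S) :
    |expRew R θ s| ≤ 1 :=
  (hθ.initDist_jointPi s).abs_sum_mul_le (hR s)

theorem abs_expRew_sub_le (hθ : feasible θ) (hθ' : feasible θ') (hR : ∀ s a, |R s a| ≤ 1)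
    (hD : ∀ s, ∑ j, ∑ x, |θ' j s x - θ j s x| ≤ D) (s : S) :
    |expRew R θ' s - expRew R θ s| ≤ D := by
  calc |expRew R θ' s - expRew R θ s| ≤ (∑ a, |jointPi θ' s a - jointPi θ s a|) * 1 + 0 :=
        abs_sum_mul_sub_sum_mul_le (hθ.initDist_jointPi s) (hR s) fun a => by simp
    _ ≤ D := by linarith [sum_abs_jointPi_sub_le hθ hθ' s, hD s]

variable [Fintype S] [DecidableEq S] [∀ i, DecidableEq (A i)]

theorem Qbar_eq_sum_jointPi_update (P : S → (∀ i, A i) → S → ℝ) (γ : ℝ)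
    (R : S → (∀ i, A i) → ℝ) (i : Fin n) (s : S) (ai : A i) :
    Qbar P θ γ R i s ai
      = ∑ a, jointPi (Function.update θ i fun _ => deltaDist ai) s a * Qval P θ γ R s a := by
  refine sum_congr rfl fun a _ => ?_
  rw [jointPi, prod_apply_update (fun j (ψ : S → A j → ℝ) => ψ s (a j)), deltaDist]
  split_ifs <;> simp

end JointPolicy

section MarkovChain

variable {n : ℕ} {S : Type} [Fintype S] {A : Fin n → Type} [∀ i, Fintype (A i)]
  {P : S → (∀ i, A i) → S → ℝ} {θ θ' : ∀ i, S → A i → ℝ} {μ μ' : S → ℝ} {D : ℝ}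

theorem stochMat.sum_abs_sum_sum_mul_le (hP : stochMat P) (c : S → (∀ i, A i) → ℝ) :
    ∑ s', |∑ s, ∑ a, c s a * P s a s'| ≤ ∑ s, ∑ a, |c s a| := by
  calc ∑ s', |∑ s, ∑ a, c s a * P s a s'| ≤ ∑ s', ∑ s, ∑ a, |c s a| * P s a s' :=
        sum_le_sum fun s' _ => (abs_sum_le_sum_abs _ _).trans <| sum_le_sum fun s _ =>
          (abs_sum_le_sum_abs _ _).trans_eq <| sum_congr rfl fun a _ => by
            rw [abs_mul, abs_of_nonneg ((hP s a).1 s')]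
    _ = ∑ s, ∑ a, |c s a| := by
      rw [sum_comm]
      refine sum_congr rfl fun s _ => ?_
      rw [sum_comm]
      simp only [← mul_sum, (hP s _).2, mul_one]

theorem initDist_stepDist (hP : stochMat P) (hθ : feasible θ) (hμ : initDist μ) :
    initDist (stepDist P θ μ) := by
  refine ⟨fun s' => sum_nonneg fun s _ => sum_nonneg fun a _ =>
    mul_nonneg (mul_nonneg (hμ.1 s) ((hθ.initDist_jointPi s).1 a)) ((hP s a).1 s'), ?_⟩
  calc ∑ s', stepDist P θ μ s' = ∑ s, μ s * ∑ a, jointPi θ s a * ∑ s', P s a s' := by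
        simp only [stepDist, mul_sum, ← mul_assoc]
        rw [sum_comm]
        exact sum_congr rfl fun s _ => sum_comm
    _ = 1 := by simp only [(hP _ _).2, mul_one, (hθ.initDist_jointPi _).2, hμ.2]

theorem sum_abs_stepDist_sub_le (hP : stochMat P) (hθ : feasible θ) (hμ' : initDist μ')
    (hD : ∀ s, ∑ a, |jointPi θ' s a - jointPi θ s a| ≤ D) :
    ∑ s', |stepDist P θ' μ' s' - stepDist P θ μ s'| ≤ ∑ s, |μ' s - μ s| + D := by
  have hdiff (s' : S) : stepDist P θ' μ' s' - stepDist P θ μ s'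
      = ∑ s, ∑ a, (jointPi θ' s a * μ' s - jointPi θ s a * μ s) * P s a s' := by
    simp only [stepDist, ← sum_sub_distrib, sub_mul, mul_comm (μ' _), mul_comm (μ _)]
  simp only [hdiff]
  calc _ ≤ ∑ s, ∑ a, |jointPi θ' s a * μ' s - jointPi θ s a * μ s| :=
        hP.sum_abs_sum_sum_mul_le _
    _ ≤ ∑ s, ((∑ a, |jointPi θ' s a - jointPi θ s a|) * |μ' s| + |μ' s - μ s|) :=
        sum_le_sum fun s _ => sum_abs_mul_sub_mul_le (hθ.initDist_jointPi s)
          (fun _ => le_rfl) fun _ => le_rfl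
    _ ≤ ∑ s, (D * μ' s + |μ' s - μ s|) := sum_le_sum fun s _ => by
        rw [abs_of_nonneg (hμ'.1 s)]
        exact add_le_add_left (mul_le_mul_of_nonneg_right (hD s) (hμ'.1 s)) _
    _ = ∑ s, |μ' s - μ s| + D := by rw [sum_add_distrib, ← mul_sum, hμ'.2, mul_one, add_comm]

theorem visit_succ (P : S → (∀ i, A i) → S → ℝ) (θ : ∀ i, S → A i → ℝ) (t : ℕ) (μ : S → ℝ) :
    visit P θ (t + 1) μ = stepDist P θ (visit P θ t μ) :=
  Function.iterate_succ_apply' _ _ _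

theorem initDist_visit (hP : stochMat P) (hθ : feasible θ) (hμ : initDist μ) (t : ℕ) :
    initDist (visit P θ t μ) := by
  induction t with
  | zero => exact hμ
  | succ t ih => rw [visit_succ]; exact initDist_stepDist hP hθ ih

theorem sum_abs_visit_sub_le (hP : stochMat P) (hθ : feasible θ) (hθ' : feasible θ')
    (hμ : initDist μ) (hD : ∀ s, ∑ j, ∑ x, |θ' j s x - θ j s x| ≤ D) (t : ℕ) :
    ∑ s, |visit P θ' t μ s - visit P θ t μ s| ≤ t * D := by
  induction t with
  | zero => simp [visit]
  | succ t ih =>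
    rw [visit_succ, visit_succ]
    refine (sum_abs_stepDist_sub_le hP hθ (initDist_visit hP hθ' hμ t) fun s =>
      (sum_abs_jointPi_sub_le hθ hθ' s).trans (hD s)).trans ?_
    push_cast
    linarith

end MarkovChain

section Discounting

variable {n : ℕ} {S : Type} [Fintype S] {A : Fin n → Type} [∀ i, Fintype (A i)]
  {P : S → (∀ i, A i) → S → ℝ} {θ θ' : ∀ i, S → A i → ℝ} {γ D : ℝ} {μ : S → ℝ}

theorem summable_pow_mul_visit (hP : stochMat P) (hθ : feasible θ) (hγ0 : 0 ≤ γ)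
    (hγ1 : γ < 1) (hμ : initDist μ) (s : S) : Summable fun t => γ ^ t * visit P θ t μ s :=
  summable_pow_mul_of_abs_le hγ0 hγ1 fun t =>
    (abs_of_nonneg ((initDist_visit hP hθ hμ t).1 s)).trans_le
      ((initDist_visit hP hθ hμ t).le_one s)

theorem initDist_dvisit (hP : stochMat P) (hθ : feasible θ) (hγ0 : 0 ≤ γ) (hγ1 : γ < 1)
    (hμ : initDist μ) : initDist (dvisit P θ γ μ) := by
  refine ⟨fun s => mul_nonneg (by linarith) (tsum_nonneg fun t =>
    mul_nonneg (pow_nonneg hγ0 t) ((initDist_visit hP hθ hμ t).1 s)), ?_⟩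
  simp only [dvisit, ← mul_sum]
  rw [← Summable.tsum_finsetSum fun s _ => summable_pow_mul_visit hP hθ hγ0 hγ1 hμ s]
  have hmass (t : ℕ) : ∑ s, visit P θ t μ s = 1 := (initDist_visit hP hθ hμ t).2
  simp only [← mul_sum, hmass, mul_one]
  rw [tsum_geometric_of_lt_one hγ0 hγ1, mul_inv_cancel₀ (by linarith)]

theorem sum_abs_dvisit_sub_le (hP : stochMat P) (hθ : feasible θ) (hθ' : feasible θ')
    (hγ0 : 0 ≤ γ) (hγ1 : γ < 1) (hμ : initDist μ)
    (hD : ∀ s, ∑ j, ∑ x, |θ' j s x - θ j s x| ≤ D) :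
    ∑ s, |dvisit P θ' γ μ s - dvisit P θ γ μ s| ≤ γ * D / (1 - γ) := by
  set Δ : ℕ → S → ℝ := fun t s => visit P θ' t μ s - visit P θ t μ s
  have hΔ (t : ℕ) (s : S) : |Δ t s| ≤ 2 := by
    have h := initDist_visit hP hθ hμ t
    have h' := initDist_visit hP hθ' hμ t
    exact abs_sub_le_iff.2 ⟨by linarith [h'.le_one s, h.1 s], by linarith [h.le_one s, h'.1 s]⟩
  have hsum (s : S) : Summable fun t => γ ^ t * |Δ t s| :=
    summable_pow_mul_of_abs_le hγ0 hγ1 fun t => (abs_abs (Δ t s)).trans_le (hΔ t s)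
  have hdiff (s : S) :
      dvisit P θ' γ μ s - dvisit P θ γ μ s = (1 - γ) * ∑' t, γ ^ t * Δ t s := by
    rw [dvisit, dvisit, ← mul_sub, ← (summable_pow_mul_visit hP hθ' hγ0 hγ1 hμ s).tsum_sub
      (summable_pow_mul_visit hP hθ hγ0 hγ1 hμ s)]
    simp only [Δ, mul_sub]
  have hγn : ‖γ‖ < 1 := by rwa [Real.norm_eq_abs, abs_of_nonneg hγ0]
  calc ∑ s, |dvisit P θ' γ μ s - dvisit P θ γ μ s|
      ≤ ∑ s, (1 - γ) * ∑' t, γ ^ t * |Δ t s| := sum_le_sum fun s _ => by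
        rw [hdiff, abs_mul, abs_of_nonneg (by linarith)]
        gcongr
        have hnorm : Summable fun t => ‖γ ^ t * Δ t s‖ := by
          simpa [Real.norm_eq_abs, abs_mul, abs_of_nonneg hγ0] using hsum s
        simpa [Real.norm_eq_abs, abs_mul, abs_of_nonneg hγ0] using norm_tsum_le_tsum_norm hnorm
    _ = (1 - γ) * ∑' t, γ ^ t * ∑ s, |Δ t s| := by
        rw [← mul_sum, ← Summable.tsum_finsetSum fun s _ => hsum s]
        simp only [mul_sum]
    _ ≤ (1 - γ) * ∑' t : ℕ, D * (t * γ ^ t) := by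
        refine mul_le_mul_of_nonneg_left (Summable.tsum_le_tsum (fun t => ?_) ?_ ?_) (by linarith)
        · rw [show D * (t * γ ^ t) = γ ^ t * (t * D) by ring]
          exact mul_le_mul_of_nonneg_left (sum_abs_visit_sub_le hP hθ hθ' hμ hD t) (by positivity)
        · simpa only [mul_sum] using summable_sum fun s _ => hsum s
        · simpa using (summable_pow_mul_geometric_of_norm_lt_one 1 hγn).mul_left D
    _ = γ * D / (1 - γ) := by
        rw [tsum_mul_left, tsum_coe_mul_geometric_of_norm_lt_one hγn]
        field_simp [show 1 - γ ≠ 0 by linarith]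

end Discounting

section ValueFunctions

variable {n : ℕ} {S : Type} [Fintype S] [DecidableEq S] {A : Fin n → Type}
  [∀ i, Fintype (A i)] {P : S → (∀ i, A i) → S → ℝ}
  {θ θ' : ∀ i, S → A i → ℝ} {R : S → (∀ i, A i) → ℝ} {γ D : ℝ}

theorem Vval_eq_sum_dvisit (hP : stochMat P) (hθ : feasible θ) (hγ0 : 0 ≤ γ) (hγ1 : γ < 1)
    (s : S) :
    Vval P θ γ R s = (1 - γ)⁻¹ * ∑ s', dvisit P θ γ (deltaDist s) s' * expRew R θ s' := by
  have hs (s' : S) : Summable fun t => γ ^ t * visit P θ t (deltaDist s) s' * expRew R θ s' :=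
    (summable_pow_mul_visit hP hθ hγ0 hγ1 (initDist_deltaDist s) s').mul_right _
  simp only [Vval, dvisit, mul_sum, ← mul_assoc]
  rw [Summable.tsum_finsetSum fun s' _ => hs s']
  refine sum_congr rfl fun s' _ => ?_
  rw [tsum_mul_right, inv_mul_cancel₀ (by linarith), one_mul]

theorem abs_Vval_le (hP : stochMat P) (hθ : feasible θ) (hγ0 : 0 ≤ γ) (hγ1 : γ < 1)
    (hR : ∀ s a, |R s a| ≤ 1) (s : S) : |Vval P θ γ R s| ≤ (1 - γ)⁻¹ := by
  rw [Vval_eq_sum_dvisit hP hθ hγ0 hγ1, abs_mul, abs_of_pos (inv_pos.2 (by linarith))]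
  exact mul_le_of_le_one_right (by positivity)
    ((initDist_dvisit hP hθ hγ0 hγ1 (initDist_deltaDist s)).abs_sum_mul_le (abs_expRew_le hθ hR))

theorem abs_Vval_sub_le (hP : stochMat P) (hθ : feasible θ) (hθ' : feasible θ')
    (hγ0 : 0 ≤ γ) (hγ1 : γ < 1) (hR : ∀ s a, |R s a| ≤ 1)
    (hD : ∀ s, ∑ j, ∑ x, |θ' j s x - θ j s x| ≤ D) (s : S) :
    |Vval P θ' γ R s - Vval P θ γ R s| ≤ D / (1 - γ) ^ 2 := by
  have hδ := initDist_deltaDist s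
  rw [Vval_eq_sum_dvisit hP hθ' hγ0 hγ1, Vval_eq_sum_dvisit hP hθ hγ0 hγ1, ← mul_sub, abs_mul,
    abs_of_pos (inv_pos.2 (by linarith))]
  calc (1 - γ)⁻¹ * |∑ s', dvisit P θ' γ (deltaDist s) s' * expRew R θ' s'
        - ∑ s', dvisit P θ γ (deltaDist s) s' * expRew R θ s'|
      ≤ (1 - γ)⁻¹ * ((∑ s', |dvisit P θ' γ (deltaDist s) s' - dvisit P θ γ (deltaDist s) s'|)
          * 1 + D) := by
        gcongr
        exact abs_sum_mul_sub_sum_mul_le (initDist_dvisit hP hθ hγ0 hγ1 hδ)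
          (abs_expRew_le hθ' hR) (abs_expRew_sub_le hθ hθ' hR hD)
    _ ≤ (1 - γ)⁻¹ * (γ * D / (1 - γ) * 1 + D) := by
        gcongr
        exact sum_abs_dvisit_sub_le hP hθ hθ' hγ0 hγ1 hδ hD
    _ = D / (1 - γ) ^ 2 := by field_simp [show 1 - γ ≠ 0 by linarith]; ring

theorem abs_Qval_le (hP : stochMat P) (hθ : feasible θ) (hγ0 : 0 ≤ γ) (hγ1 : γ < 1)
    (hR : ∀ s a, |R s a| ≤ 1) (s : S) (a : ∀ i, A i) : |Qval P θ γ R s a| ≤ (1 - γ)⁻¹ := by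
  calc |Qval P θ γ R s a| ≤ 1 + γ * (1 - γ)⁻¹ := by
        refine (abs_add_le _ _).trans (add_le_add (hR s a) ?_)
        rw [abs_mul, abs_of_nonneg hγ0]
        exact mul_le_mul_of_nonneg_left
          (initDist.abs_sum_mul_le (hP s a) (abs_Vval_le hP hθ hγ0 hγ1 hR)) hγ0
    _ = (1 - γ)⁻¹ := by field_simp [show 1 - γ ≠ 0 by linarith]; ring

theorem abs_Qval_sub_le (hP : stochMat P) (hθ : feasible θ) (hθ' : feasible θ')
    (hγ0 : 0 ≤ γ) (hγ1 : γ < 1) (hR : ∀ s a, |R s a| ≤ 1)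
    (hD : ∀ s, ∑ j, ∑ x, |θ' j s x - θ j s x| ≤ D) (s : S) (a : ∀ i, A i) :
    |Qval P θ' γ R s a - Qval P θ γ R s a| ≤ γ * (D / (1 - γ) ^ 2) := by
  rw [show Qval P θ' γ R s a - Qval P θ γ R s a
      = γ * ∑ s', P s a s' * (Vval P θ' γ R s' - Vval P θ γ R s') by
    simp only [Qval, mul_sub, sum_sub_distrib]; ring, abs_mul, abs_of_nonneg hγ0]
  exact mul_le_mul_of_nonneg_left
    (initDist.abs_sum_mul_le (hP s a) (abs_Vval_sub_le hP hθ hθ' hγ0 hγ1 hR hD)) hγ0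

variable [∀ i, DecidableEq (A i)]

theorem abs_Qbar_le (hP : stochMat P) (hθ : feasible θ) (hγ0 : 0 ≤ γ) (hγ1 : γ < 1)
    (hR : ∀ s a, |R s a| ≤ 1) (i : Fin n) (s : S) (ai : A i) :
    |Qbar P θ γ R i s ai| ≤ (1 - γ)⁻¹ := by
  rw [Qbar_eq_sum_jointPi_update]
  exact ((hθ.update fun _ => initDist_deltaDist ai).initDist_jointPi s).abs_sum_mul_le
    (abs_Qval_le hP hθ hγ0 hγ1 hR s)

theorem abs_Qbar_sub_le (hP : stochMat P) (hθ : feasible θ) (hθ' : feasible θ')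
    (hγ0 : 0 ≤ γ) (hγ1 : γ < 1) (hR : ∀ s a, |R s a| ≤ 1)
    (hD : ∀ s, ∑ j, ∑ x, |θ' j s x - θ j s x| ≤ D) (i : Fin n) (s : S) (ai : A i) :
    |Qbar P θ' γ R i s ai - Qbar P θ γ R i s ai| ≤ D / (1 - γ) ^ 2 := by
  have hδ : feasibleAgent (S := S) i fun _ => deltaDist ai := fun _ => initDist_deltaDist ai
  rw [Qbar_eq_sum_jointPi_update, Qbar_eq_sum_jointPi_update]
  calc _ ≤ (∑ a, |jointPi (Function.update θ' i fun _ => deltaDist ai) s a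
          - jointPi (Function.update θ i fun _ => deltaDist ai) s a|) * (1 - γ)⁻¹
          + γ * (D / (1 - γ) ^ 2) :=
        abs_sum_mul_sub_sum_mul_le ((hθ.update hδ).initDist_jointPi s)
          (abs_Qval_le hP hθ' hγ0 hγ1 hR s) (abs_Qval_sub_le hP hθ hθ' hγ0 hγ1 hR hD s)
    _ ≤ D * (1 - γ)⁻¹ + γ * (D / (1 - γ) ^ 2) := by
        gcongr
        exact ((sum_abs_jointPi_sub_le (hθ.update hδ) (hθ'.update hδ) s).trans
          (sum_sum_abs_update_sub_le i _ s)).trans (hD s)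
    _ = D / (1 - γ) ^ 2 := by field_simp [show 1 - γ ≠ 0 by linarith]; ring

theorem sum_abs_gradJ_sub_le (hP : stochMat P) (hθ : feasible θ) (hθ' : feasible θ')
    (hγ0 : 0 ≤ γ) (hγ1 : γ < 1) (hR : ∀ s a, |R s a| ≤ 1) {ρ : S → ℝ} (hρ : initDist ρ)
    (hD : ∀ s, ∑ j, ∑ x, |θ' j s x - θ j s x| ≤ D) (i : Fin n) (ai : A i) :
    ∑ s, |gradJ P θ' γ R ρ i s ai - gradJ P θ γ R ρ i s ai| ≤ (1 + γ) * D / (1 - γ) ^ 3 := by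
  have h1γ : 0 < 1 - γ := by linarith
  simp only [gradJ, mul_assoc, ← mul_sub, abs_mul, ← mul_sum, abs_of_pos (one_div_pos.2 h1γ)]
  calc 1 / (1 - γ) * ∑ s, |dvisit P θ' γ ρ s * Qbar P θ' γ R i s ai
        - dvisit P θ γ ρ s * Qbar P θ γ R i s ai|
      ≤ 1 / (1 - γ) * ((∑ s, |dvisit P θ' γ ρ s - dvisit P θ γ ρ s|) * (1 - γ)⁻¹
          + D / (1 - γ) ^ 2) := by
        gcongr
        exact sum_abs_mul_sub_mul_le (initDist_dvisit hP hθ hγ0 hγ1 hρ)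
          (fun s => abs_Qbar_le hP hθ' hγ0 hγ1 hR i s ai)
          (fun s => abs_Qbar_sub_le hP hθ hθ' hγ0 hγ1 hR hD i s ai)
    _ ≤ 1 / (1 - γ) * (γ * D / (1 - γ) * (1 - γ)⁻¹ + D / (1 - γ) ^ 2) := by
        gcongr
        exact sum_abs_dvisit_sub_le hP hθ hθ' hγ0 hγ1 hρ hD
    _ = (1 + γ) * D / (1 - γ) ^ 3 := by field_simp; ring

end ValueFunctions

theorem sum_sum_abs_sub_le_sqrt_mul_sqrt_polNormSq {n : ℕ} {S : Type} [Fintype S]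
    {A : Fin n → Type} [∀ i, Fintype (A i)] (θ θ' : ∀ i, S → A i → ℝ) (s : S) :
    ∑ j, ∑ x, |θ' j s x - θ j s x|
      ≤ √(∑ i, (Fintype.card (A i) : ℝ)) * √(polNormSq θ' θ) :=
  (sum_sum_abs_le_sqrt_mul_sqrt fun j x => θ' j s x - θ j s x).trans <| by
    rw [polNormSq]
    gcongr with j
    exact single_le_sum (f := fun s' => ∑ x, (θ' j s' x - θ j s' x) ^ 2)
      (fun _ _ => sum_nonneg fun _ _ => sq_nonneg _) (mem_univ s)

end MAMDP

/-- Smoothness of the gradient field: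
`‖g(θ') − g(θ)‖ ≤ (2/(1−γ)³)(∑_i |A_i|) ‖θ' − θ‖`. -/
theorem stmt16 {n : ℕ} {S : Type} [Fintype S] [DecidableEq S]
    {A : Fin n → Type} [∀ i, Fintype (A i)] [∀ i, DecidableEq (A i)]
    (P : S → (∀ i, A i) → S → ℝ) (hP : stochMat P)
    (r : Fin n → S → (∀ i, A i) → ℝ) (hr : ∀ i s a, 0 ≤ r i s a ∧ r i s a ≤ 1)
    (γ : ℝ) (hγ0 : 0 ≤ γ) (hγ1 : γ < 1)
    (ρ : S → ℝ) (hρ : initDist ρ)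
    (θ θ' : ∀ i, S → A i → ℝ) (hθ : feasible θ) (hθ' : feasible θ') :
    Real.sqrt (∑ i, ∑ s, ∑ a,
        (gradJ P θ' γ (r i) ρ i s a - gradJ P θ γ (r i) ρ i s a) ^ 2)
      ≤ (2 / (1 - γ) ^ 3) * (∑ i, (Fintype.card (A i) : ℝ)) *
        Real.sqrt (polNormSq θ' θ) := by
  have h1γ : 0 < 1 - γ := by linarith
  set CA : ℝ := ∑ i, (Fintype.card (A i) : ℝ) with hCA
  have hCA0 : 0 ≤ CA := sum_nonneg fun i _ => Nat.cast_nonneg _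
  set D := √CA * √(polNormSq θ' θ) with hD_def
  have hr' (i : Fin n) (s : S) (a : ∀ i, A i) : |r i s a| ≤ 1 :=
    abs_le.2 ⟨by linarith [(hr i s a).1], (hr i s a).2⟩
  have hslice (i : Fin n) (ai : A i) :
      ∑ s, (gradJ P θ' γ (r i) ρ i s ai - gradJ P θ γ (r i) ρ i s ai) ^ 2
        ≤ (2 * D / (1 - γ) ^ 3) ^ 2 :=
    sum_sq_le_sq_of_sum_abs_le <| (sum_abs_gradJ_sub_le hP hθ hθ' hγ0 hγ1 (hr' i) hρ
      (sum_sum_abs_sub_le_sqrt_mul_sqrt_polNormSq θ θ') i ai).trans (by gcongr; linarith)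
  rw [Real.sqrt_le_left (by positivity)]
  calc ∑ i, ∑ s, ∑ a, (gradJ P θ' γ (r i) ρ i s a - gradJ P θ γ (r i) ρ i s a) ^ 2
      = ∑ i, ∑ a, ∑ s, (gradJ P θ' γ (r i) ρ i s a - gradJ P θ γ (r i) ρ i s a) ^ 2 :=
        sum_congr rfl fun i _ => sum_comm
    _ ≤ ∑ i, ∑ _a : A i, (2 * D / (1 - γ) ^ 3) ^ 2 := by gcongr with i _ a; exact hslice i a
    _ = CA * (2 * D / (1 - γ) ^ 3) ^ 2 := by
        simp only [sum_const, card_univ, nsmul_eq_mul, ← sum_mul, ← hCA]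
    _ = (2 / (1 - γ) ^ 3 * CA * √(polNormSq θ' θ)) ^ 2 := by
        simp only [hD_def, div_pow, mul_pow, Real.sq_sqrt hCA0]
        ring
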